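/- Let α be a word of length ℓ with per(α) ≤ ℓ/3, and suppose α has non-shiftable occurrences at positions i' and i in a text T with i' < i. Then i - i' > ℓ/2. -/

import Mathlib

variable {α : Type*}

/-- The subword of `w` of length `len` starting at 0-indexed position `i`. -/
def subword (w : List α) (i len : ℕ) : List α := (w.drop i).take len

/-- `u` occurs in `w` at 0-indexed position `i`. -/
def OccursAt (u w : List α) (i : ℕ) : Prop :=
  i + u.length ≤ w.length ∧ subword w i u.length = u

/-- `p` is a period of `w`: `w[i] = w[i+p]` whenever both positions are in range. -/
def HasPeriod (w : List α) (p : ℕ) : Prop :=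
  0 < p ∧ ∀ i : ℕ, i + p < w.length → w[i]? = w[i + p]?

/-- `per w`: the length of the shortest period of `w`. -/
noncomputable def minPeriod (w : List α) : ℕ := sInf {p | HasPeriod w p}

/-- An occurrence of `x` at (0-indexed) position `i` in `w` is shiftable if
`x` also occurs at position `i - per x`. -/
def Shiftable (x w : List α) (i : ℕ) : Prop :=
  minPeriod x ≤ i ∧ OccursAt x w (i - minPeriod x)

/-!
If the two occurrences are at distance `d ≤ ℓ/2`, then `d` is a period of `A`, and
`per(A) + d ≤ ℓ/3 + ℓ/2 ≤ ℓ`, so by the Fine–Wilf periodicity lemma `per(A)` divides `d`.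
The occurrence at `i'` then covers the window `[i - per(A), i)` in phase with `A`, so `A` also
occurs at `i - per(A)`, i.e. the occurrence at `i` is shiftable.
-/

lemma hasPeriod_iff_pos_and_list_hasPeriod {w : List α} {p : ℕ} :
    HasPeriod w p ↔ 0 < p ∧ w.HasPeriod p := by
  rw [HasPeriod, List.hasPeriod_iff_getElem?]
  exact and_congr_right fun _ => forall_congr' fun i => by rw [Nat.lt_sub_iff_add_lt]

lemma HasPeriod.gcd {w : List α} {p q : ℕ} (hp : HasPeriod w p) (hq : HasPeriod w q)
    (hlen : p + q ≤ w.length) : HasPeriod w (p.gcd q) := by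
  rw [hasPeriod_iff_pos_and_list_hasPeriod] at *
  exact ⟨Nat.gcd_pos_of_pos_left q hp.1, hp.2.gcd hq.2 (by omega)⟩

lemma hasPeriod_minPeriod {w : List α} (hw : w ≠ []) : HasPeriod w (minPeriod w) :=
  Nat.sInf_mem (s := {p | HasPeriod w p})
    ⟨w.length, List.length_pos_of_ne_nil hw, fun _ _ => by omega⟩

lemma minPeriod_le {w : List α} {p : ℕ} (hp : HasPeriod w p) : minPeriod w ≤ p :=
  Nat.sInf_le hp

lemma minPeriod_dvd {w : List α} {q : ℕ} (hq : HasPeriod w q)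
    (hlen : minPeriod w + q ≤ w.length) : minPeriod w ∣ q := by
  have hw : w ≠ [] := List.ne_nil_of_length_pos (by have := hq.1; omega)
  have hmin := hasPeriod_minPeriod hw
  have hgcd : (minPeriod w).gcd q = minPeriod w :=
    le_antisymm (Nat.gcd_le_left q hmin.1) (minPeriod_le (hmin.gcd hq hlen))
  exact hgcd ▸ Nat.gcd_dvd_right _ q

lemma OccursAt.getElem? {u w : List α} {i j : ℕ} (h : OccursAt u w i) (hj : j < u.length) :
    w[i + j]? = u[j]? := by
  conv_rhs => rw [← h.2]
  simp [subword, hj]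

lemma occursAt_of_getElem? {u w : List α} {i : ℕ} (hle : i + u.length ≤ w.length)
    (h : ∀ j < u.length, w[i + j]? = u[j]?) : OccursAt u w i := by
  refine ⟨hle, List.ext_getElem? fun j => ?_⟩
  by_cases hj : j < u.length
  · simp [subword, hj, h j hj]
  · simp [subword, hj]

lemma OccursAt.hasPeriod_sub {u w : List α} {i i' : ℕ} (h' : OccursAt u w i')
    (h : OccursAt u w i) (hlt : i' < i) : HasPeriod u (i - i') := by
  refine ⟨by omega, fun j hj => ?_⟩
  rw [← h'.getElem? (j := j + (i - i')) hj, ← h.getElem? (j := j) (by omega)]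
  congr 1
  omega

/-- Positions `i - p, …, i - 1` are covered by the occurrence at `i'` at offsets congruent
to `0, …, p - 1` modulo the period `p`. -/
lemma OccursAt.sub_period {u w : List α} {p i i' : ℕ} (hp : HasPeriod u p)
    (h' : OccursAt u w i') (h : OccursAt u w i) (hpi : i' + p ≤ i)
    (hcover : i ≤ i' + u.length) (hdvd : p ∣ i - i') : OccursAt u w (i - p) := by
  have hper := (hasPeriod_iff_pos_and_list_hasPeriod.mp hp).2
  refine occursAt_of_getElem? (by have := h.1; omega) fun j hj => ?_
  rcases Nat.lt_or_ge j p with hjp | hjp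
  · have hoff : (i - p + j - i') % p = j := by
      obtain ⟨k, hk⟩ := Nat.dvd_sub hdvd (dvd_refl p)
      rw [show i - p + j - i' = j + p * k by omega, Nat.add_mul_mod_self_left,
        Nat.mod_eq_of_lt hjp]
    rw [show i - p + j = i' + (i - p + j - i') by omega, h'.getElem? (by omega),
      ← hper.getElem?_mod _ _ _ (by omega), hoff]
  · rw [show i - p + j = i + (j - p) by omega, h.getElem? (by omega), hp.2 _ (by omega)]
    congr 1
    omega

theorem statement_5_general (T A : List α) (ℓ i i' : ℕ)
    (hlen : A.length = ℓ) (hper : 3 * minPeriod A ≤ ℓ)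
    (h1 : OccursAt A T i')
    (h2 : OccursAt A T i) (hs2 : ¬ Shiftable A T i)
    (hlt : i' < i) :
    ℓ < 2 * (i - i') := by
  by_contra! hclose
  have hd : HasPeriod A (i - i') := h1.hasPeriod_sub h2 hlt
  have hdvd : minPeriod A ∣ i - i' := minPeriod_dvd hd (by omega)
  have hle : minPeriod A ≤ i - i' := Nat.le_of_dvd (by omega) hdvd
  have hA : A ≠ [] := List.ne_nil_of_length_pos (by omega)
  exact hs2 ⟨by omega,
    h1.sub_period (hasPeriod_minPeriod hA) h2 (by omega) (by omega) hdvd⟩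

/-- If `A` has length `ℓ` with `per A ≤ ℓ/3` and has non-shiftable occurrences
at positions `i' < i` in `T`, then `i - i' > ℓ/2`. -/
theorem statement_5 (T A : List α) (ℓ i i' : ℕ)
    (hlen : A.length = ℓ) (hper : 3 * minPeriod A ≤ ℓ)
    (h1 : OccursAt A T i') (hs1 : ¬ Shiftable A T i')
    (h2 : OccursAt A T i) (hs2 : ¬ Shiftable A T i)
    (hlt : i' < i) :
    ℓ < 2 * (i - i') :=
  statement_5_general T A ℓ i i' hlen hper h1 h2 hs2 hlt
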